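/- Two normal-form transformations define the same self-map of ℕ → Fin m if and only if they coincide graphically: if N(k; p_k, …, p₀) = N(l; q_l, …, q₀) as functions, where k, l ≥ 0, p₀, p_k, q₀, q_l ≥ 0, p_i ≥ 1 for 1 ≤ i ≤ k-1 and q_j ≥ 1 for 1 ≤ j ≤ l-1, then k = l and p_i = q_i for all 0 ≤ i ≤ k. -/

import Mathlib

/- The automaton transformation `f₀` of the Mealy automaton `I_m` acting on
infinite words `u : ℕ → Fin m`: if `u` is constantly `m-1` it returns the
constant `0` sequence; otherwise, with `j` the least index where `u j ≠ m-1`,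
it sets positions `≤ j` to `0` and keeps the rest. -/
open Classical in
noncomputable def f0 (m : ℕ) (u : ℕ → Fin m) : ℕ → Fin m :=
  if h : ∃ j, (u j : ℕ) ≠ m - 1 then
    fun i => if i ≤ Nat.find h then ⟨0, (u 0).pos⟩ else u i
  else fun _ => ⟨0, (u 0).pos⟩

/- The automaton transformation `f₁` (the base-`m` odometer): if `u` is
constantly `m-1` it returns the constant `0` sequence; otherwise, with `j` the
least index where `u j ≠ m-1`, positions `< j` become `0`, position `j` is
incremented and the rest are kept. -/
open Classical in
noncomputable def f1 (m : ℕ) (u : ℕ → Fin m) : ℕ → Fin m :=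
  if h : ∃ j, (u j : ℕ) ≠ m - 1 then
    fun i =>
      if i < Nat.find h then ⟨0, (u 0).pos⟩
      else if hie : i = Nat.find h then
        ⟨(u i : ℕ) + 1, by
          have h2 := Nat.find_spec h
          rw [← hie] at h2
          have h3 := (u i).isLt
          have h4 := (u 0).pos
          omega⟩
      else u i
  else fun _ => ⟨0, (u 0).pos⟩

/- The inner part `B j = f₀ ∘ f₁^{m^j p_j - 1} ∘ ⋯ ∘ f₀ ∘ f₁^{m p₁ - 1} ∘ f₀ ∘ f₁^{p₀}`
of a normal form (with `B 0 = f₀ ∘ f₁^{p₀}`). -/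
noncomputable def nfB (m : ℕ) (p : ℕ → ℕ) : ℕ → (ℕ → Fin m) → ℕ → Fin m
  | 0 => f0 m ∘ (f1 m)^[p 0]
  | j + 1 => f0 m ∘ (f1 m)^[m ^ (j + 1) * p (j + 1) - 1] ∘ nfB m p j

/- The normal-form transformation
`N(k; p_k, …, p₀) = f₁^{p_k} ∘ f₀ ∘ f₁^{m^{k-1} p_{k-1} - 1} ∘ ⋯ ∘ f₀ ∘ f₁^{m p₁ - 1} ∘ f₀ ∘ f₁^{p₀}`,
with `N(0; p₀) = f₁^{p₀}`. -/
noncomputable def nf (m : ℕ) (k : ℕ) (p : ℕ → ℕ) : (ℕ → Fin m) → ℕ → Fin m :=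
  match k with
  | 0 => (f1 m)^[p 0]
  | k' + 1 => (f1 m)^[p (k' + 1)] ∘ nfB m p k'

/-! Reading a word with finitely many nonzero letters as the base-`m` expansion of a natural
number, `f₁` becomes `n ↦ n + 1` and `f₀` becomes `f0Nat`, so the parameters have to be
recovered from the induced map on `ℕ`. For `k = 0` this map is a translation, while for `k ≥ 1`
all its values are congruent to `p k` modulo `m`. For `k, l ≥ 1`, inputs `m ^ T - 1 - p 0` with
`T` large identify `p 0`; after the first `f₀`, multiples of `m` are mapped to `m` times the
values of a normal form with one stage fewer, plus `p k % m`, and induction on `k` finishes. -/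

open Filter

section Arithmetic

variable {m : ℕ}

lemma exists_pow_mul_eq_not_dvd (hm : 1 < m) {n : ℕ} (hn : n ≠ 0) :
    ∃ v X, m ^ v * X = n ∧ ¬ m ∣ X :=
  ⟨_, _, Nat.pow_padicValNat_mul_divMaxPow m n, Nat.not_dvd_divMaxPow hm hn⟩

lemma not_pow_succ_padicValNat_dvd (hm : 1 < m) {n : ℕ} (hn : n ≠ 0) :
    ¬ m ^ (padicValNat m n + 1) ∣ n := by
  rw [Nat.pow_dvd_iff_le_padicValNat hm.ne' hn]
  omega

/- In base `m`, the trailing run of digits `m - 1` of `n` and the digit after it are set to `0`,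
as `f₀` does on words. -/
def f0Nat (m n : ℕ) : ℕ :=
  m ^ (padicValNat m (n + 1) + 1) * ((n + 1) / m ^ (padicValNat m (n + 1) + 1))

lemma f0Nat_of_pow_mul_eq (hm : 0 < m) {n v X : ℕ} (h : m ^ v * X = n + 1) (hX : ¬ m ∣ X) :
    f0Nat m n = m ^ (v + 1) * (X / m) := by
  have hv : padicValNat m (n + 1) = v :=
    congrArg Prod.fst (Nat.maxPowDvdDiv_of_pow_mul_eq n.add_one_ne_zero h hX)
  rw [f0Nat, hv, ← h, pow_succ, Nat.mul_div_mul_left _ _ (pow_pos hm v)]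

lemma dvd_f0Nat (m n : ℕ) : m ∣ f0Nat m n :=
  dvd_mul_of_dvd_left (dvd_pow_self m (Nat.add_one_ne_zero _)) _

lemma not_dvd_mul_add_one (hm : 1 < m) (x : ℕ) : ¬ m ∣ m * x + 1 := fun h =>
  absurd (Nat.le_of_dvd one_pos ((Nat.dvd_add_right (dvd_mul_right m x)).mp h)) (by omega)

lemma f0Nat_mul (hm : 1 < m) (x : ℕ) : f0Nat m (m * x) = m * x := by
  rw [f0Nat_of_pow_mul_eq (by omega) (v := 0) (by rw [pow_zero, one_mul])
    (not_dvd_mul_add_one hm x), Nat.mul_add_div (by omega), Nat.div_eq_of_lt hm, add_zero, pow_one]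

lemma f0Nat_pow_sub_one (hm : 1 < m) (T : ℕ) : f0Nat m (m ^ T - 1) = 0 := by
  have h : m ^ T * 1 = m ^ T - 1 + 1 := by
    have := Nat.one_le_pow T m (by omega)
    omega
  rw [f0Nat_of_pow_mul_eq (by omega) h (by simpa using hm.ne'), Nat.div_eq_of_lt hm, mul_zero]

lemma f0Nat_mul_sub_one (hm : 1 < m) {z : ℕ} (hz : z ≠ 0) :
    f0Nat m (m * z - 1) = m * f0Nat m (z - 1) := by
  obtain ⟨v, X, hvX, hX⟩ := exists_pow_mul_eq_not_dvd hm hz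
  have hz' : m ^ v * X = z - 1 + 1 := by omega
  have hmz : m ^ (v + 1) * X = m * z - 1 + 1 := by
    have : 0 < m * z := Nat.mul_pos (by omega) (Nat.pos_of_ne_zero hz)
    rw [pow_succ', mul_assoc, hvX]
    omega
  rw [f0Nat_of_pow_mul_eq (by omega) hmz hX, f0Nat_of_pow_mul_eq (by omega) hz' hX,
    pow_succ' m (v + 1), mul_assoc]

lemma f0Nat_pow_add (hm : 1 < m) {T n : ℕ} (h : n + 1 < m ^ T) :
    f0Nat m (m ^ T + n) = m ^ T + f0Nat m n := by
  obtain ⟨v, X, hvX, hX⟩ := exists_pow_mul_eq_not_dvd hm n.add_one_ne_zero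
  have hvT : v < T := by
    have : m ^ v ≤ n + 1 := by
      rw [← hvX]
      exact Nat.le_mul_of_pos_right _ (Nat.pos_of_ne_zero (by rintro rfl; simp at hX))
    exact (Nat.pow_lt_pow_iff_right hm).mp (by omega)
  have hT : m ^ T = m ^ (v + 1) * m ^ (T - v - 1) := by rw [← pow_add]; congr 1; omega
  have hsum : m ^ v * (m * m ^ (T - v - 1) + X) = m ^ T + n + 1 := by
    rw [mul_add, ← mul_assoc, ← pow_succ, ← hT, hvX, add_assoc]
  have hXT : ¬ m ∣ m * m ^ (T - v - 1) + X :=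
    fun h => hX ((Nat.dvd_add_right (dvd_mul_right _ _)).mp h)
  rw [f0Nat_of_pow_mul_eq (by omega) hsum hXT, f0Nat_of_pow_mul_eq (by omega) hvX hX,
    Nat.mul_add_div (by omega), mul_add, ← hT]

end Arithmetic

section Digits

variable {m : ℕ}

lemma digit_eq_zero_of_dvd (hm : 0 < m) {a i : ℕ} (h : m ^ (i + 1) ∣ a) :
    a / m ^ i % m = 0 := by
  obtain ⟨c, rfl⟩ := h
  rw [pow_succ, mul_assoc, Nat.mul_div_cancel_left _ (pow_pos hm i), Nat.mul_mod_right]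

lemma div_pow_eq_sub_one (hm : 0 < m) {n i Y : ℕ} (h : m ^ i * Y = n + 1) :
    n / m ^ i = Y - 1 := by
  obtain ⟨Y, rfl⟩ : ∃ Y', Y = Y' + 1 := Nat.exists_eq_succ_of_ne_zero (by rintro rfl; simp at h)
  have hpos := pow_pos hm i
  have hn : n = m ^ i * Y + (m ^ i - 1) := by rw [mul_add_one] at h; omega
  rw [hn, Nat.mul_add_div hpos, Nat.div_eq_of_lt (by omega), add_zero, Nat.add_sub_cancel]

lemma sub_one_mod_of_dvd (hm : 0 < m) {Y : ℕ} (hY : Y ≠ 0) (h : m ∣ Y) :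
    (Y - 1) % m = m - 1 := by
  obtain ⟨c, rfl⟩ := h
  obtain ⟨c, rfl⟩ : ∃ c', c = c' + 1 := Nat.exists_eq_succ_of_ne_zero (by rintro rfl; simp at hY)
  rw [show m * (c + 1) - 1 = m * c + (m - 1) by rw [mul_add_one]; omega, Nat.mul_add_mod,
    Nat.mod_eq_of_lt (by omega)]

lemma sub_one_mod_add_one (hm : 0 < m) {Y : ℕ} (h : ¬ m ∣ Y) : (Y - 1) % m + 1 = Y % m := by
  have hr : Y % m ≠ 0 := fun h' => h (Nat.dvd_of_mod_eq_zero h')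
  have hY := Nat.div_add_mod Y m
  rw [show Y - 1 = m * (Y / m) + (Y % m - 1) by omega, Nat.mul_add_mod,
    Nat.mod_eq_of_lt (by have := Nat.mod_lt Y hm; omega)]
  omega

lemma digit_eq_of_lt_of_pow_dvd (hm : 0 < m) {n v i : ℕ} (h : m ^ v ∣ n + 1) (hi : i < v) :
    n / m ^ i % m = m - 1 := by
  obtain ⟨c, hc⟩ := h
  have hY : m ^ i * (m ^ (v - i) * c) = n + 1 := by
    rw [← mul_assoc, ← pow_add, Nat.add_sub_cancel' hi.le, hc]
  rw [div_pow_eq_sub_one hm hY]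
  refine sub_one_mod_of_dvd hm (by rintro h0; simp [h0] at hY) (dvd_mul_of_dvd_left ?_ c)
  exact dvd_pow_self m (by omega)

lemma digit_add_one_of_not_dvd (hm : 0 < m) {n v : ℕ} (h : m ^ v ∣ n + 1)
    (h' : ¬ m ^ (v + 1) ∣ n + 1) : n / m ^ v % m + 1 = (n + 1) / m ^ v % m := by
  obtain ⟨Y, hY⟩ := h
  have hmY : ¬ m ∣ Y := fun hdvd => h' (hY ▸ pow_succ m v ▸ mul_dvd_mul_left _ hdvd)
  rw [div_pow_eq_sub_one hm hY.symm, hY, Nat.mul_div_cancel_left _ (pow_pos hm v)]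
  exact sub_one_mod_add_one hm hmY

lemma succ_div_pow_of_not_dvd {n v i : ℕ} (h' : ¬ m ^ (v + 1) ∣ n + 1) (hi : v < i) :
    (n + 1) / m ^ i = n / m ^ i :=
  Nat.succ_div_of_not_dvd fun h => h' (dvd_trans (pow_dvd_pow m hi) h)

lemma pow_mul_div_pow_div_pow (hm : 0 < m) {a j i : ℕ} (h : j ≤ i) :
    m ^ j * (a / m ^ j) / m ^ i = a / m ^ i := by
  rw [← Nat.add_sub_cancel' h, pow_add, Nat.mul_div_mul_left _ _ (pow_pos hm j),
    Nat.div_div_eq_div_mul]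

end Digits

section Words

variable {m : ℕ} [NeZero m]

def digitWord (m : ℕ) [NeZero m] (n : ℕ) : ℕ → Fin m := fun i => Fin.ofNat m (n / m ^ i)

@[simp]
lemma val_digitWord (n i : ℕ) : (digitWord m n i : ℕ) = n / m ^ i % m := Fin.val_ofNat _ _

lemma digitWord_injective (hm : 1 < m) : Function.Injective (digitWord m) := by
  intro a b h
  have hmod : ∀ i, a % m ^ i = b % m ^ i := by
    intro i
    induction i with
    | zero => simp [Nat.mod_one]
    | succ i ih =>
      have hi := congrArg (fun w => (w i : ℕ)) h
      simp only [val_digitWord] at hi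
      rw [Nat.mod_pow_succ, Nat.mod_pow_succ, ih, hi]
  have ha : a < m ^ (a + b) :=
    (Nat.lt_pow_self hm).trans_le (Nat.pow_le_pow_right (by omega) (Nat.le_add_right a b))
  have hb : b < m ^ (a + b) :=
    (Nat.lt_pow_self hm).trans_le (Nat.pow_le_pow_right (by omega) (Nat.le_add_left b a))
  simpa [Nat.mod_eq_of_lt ha, Nat.mod_eq_of_lt hb] using hmod (a + b)

lemma digitWord_padicValNat_ne (hm : 1 < m) (n : ℕ) :
    (digitWord m n (padicValNat m (n + 1)) : ℕ) ≠ m - 1 := by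
  have := digit_add_one_of_not_dvd (by omega) pow_padicValNat_dvd
    (not_pow_succ_padicValNat_dvd hm n.add_one_ne_zero)
  have := Nat.mod_lt ((n + 1) / m ^ padicValNat m (n + 1)) (by omega : 0 < m)
  simp only [val_digitWord]
  omega

lemma find_digitWord_ne (hm : 1 < m) (n : ℕ) (h : ∃ j, (digitWord m n j : ℕ) ≠ m - 1) :
    Nat.find h = padicValNat m (n + 1) := by
  rw [Nat.find_eq_iff]
  refine ⟨digitWord_padicValNat_ne hm n, fun j hj => ?_⟩
  rw [not_not, val_digitWord]
  exact digit_eq_of_lt_of_pow_dvd (by omega) pow_padicValNat_dvd hj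

lemma f1_digitWord (hm : 1 < m) (n : ℕ) : f1 m (digitWord m n) = digitWord m (n + 1) := by
  have h : ∃ j, (digitWord m n j : ℕ) ≠ m - 1 := ⟨_, digitWord_padicValNat_ne hm n⟩
  have hv := not_pow_succ_padicValNat_dvd hm n.add_one_ne_zero
  rw [f1, dif_pos h]
  funext i
  apply Fin.ext
  split_ifs with hlt heq <;> rw [find_digitWord_ne hm n h] at *
  · rw [val_digitWord, digit_eq_zero_of_dvd (by omega)]
    exact dvd_trans (pow_dvd_pow m hlt) pow_padicValNat_dvd
  · subst heq
    simp only [val_digitWord]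
    exact digit_add_one_of_not_dvd (by omega) pow_padicValNat_dvd hv
  · simp only [val_digitWord]
    rw [succ_div_pow_of_not_dvd hv (by omega)]

lemma f0_digitWord (hm : 1 < m) (n : ℕ) : f0 m (digitWord m n) = digitWord m (f0Nat m n) := by
  have h : ∃ j, (digitWord m n j : ℕ) ≠ m - 1 := ⟨_, digitWord_padicValNat_ne hm n⟩
  have hv := not_pow_succ_padicValNat_dvd hm n.add_one_ne_zero
  rw [f0, dif_pos h]
  funext i
  apply Fin.ext
  split_ifs with hle <;> rw [find_digitWord_ne hm n h] at *
  · rw [val_digitWord, f0Nat, digit_eq_zero_of_dvd (by omega)]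
    exact dvd_mul_of_dvd_left (pow_dvd_pow m (by omega)) _
  · simp only [val_digitWord]
    rw [f0Nat, pow_mul_div_pow_div_pow (by omega) (by omega),
      succ_div_pow_of_not_dvd hv (by omega)]

end Words

section NormalForm

variable {m : ℕ}

/- On base-`m` expansions, `nfNat m k p` is the action of `nf m k p` (`nf_digitWord`), and
`nfTail m k p` that of `nf m (k + 1) p` without its first factor `f₁^{p₀}`. -/
def chain (m : ℕ) (p : ℕ → ℕ) (a : ℕ) : ℕ → ℕ
  | 0 => a
  | j + 1 => f0Nat m (chain m p a j + (m ^ (j + 1) * p (j + 1) - 1))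

def nfTail (m k : ℕ) (p : ℕ → ℕ) (n : ℕ) : ℕ :=
  chain m p (f0Nat m n) k + p (k + 1)

def nfNat (m k : ℕ) (p : ℕ → ℕ) (n : ℕ) : ℕ :=
  match k with
  | 0 => n + p 0
  | k + 1 => nfTail m k p (n + p 0)

lemma iterate_f1_digitWord [NeZero m] (hm : 1 < m) (t n : ℕ) :
    (f1 m)^[t] (digitWord m n) = digitWord m (n + t) := by
  induction t with
  | zero => rfl
  | succ t ih => rw [Function.iterate_succ_apply', ih, f1_digitWord hm, add_assoc]

lemma nfB_digitWord [NeZero m] (hm : 1 < m) (p : ℕ → ℕ) (j n : ℕ) :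
    nfB m p j (digitWord m n) = digitWord m (chain m p (f0Nat m (n + p 0)) j) := by
  induction j with
  | zero => simp only [nfB, Function.comp_apply, iterate_f1_digitWord hm, f0_digitWord hm, chain]
  | succ j ih =>
    simp only [nfB, Function.comp_apply, ih, iterate_f1_digitWord hm, f0_digitWord hm, chain]

lemma nf_digitWord [NeZero m] (hm : 1 < m) (k : ℕ) (p : ℕ → ℕ) (n : ℕ) :
    nf m k p (digitWord m n) = digitWord m (nfNat m k p n) := by
  cases k with
  | zero => exact iterate_f1_digitWord hm _ n
  | succ k =>
    simp only [nf, Function.comp_apply, nfB_digitWord hm, iterate_f1_digitWord hm, nfNat, nfTail]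

end NormalForm

section Uniqueness

variable {m : ℕ}

lemma chain_congr {p q : ℕ → ℕ} {j : ℕ} (h : ∀ i, 1 ≤ i → i ≤ j → p i = q i) (a : ℕ) :
    chain m p a j = chain m q a j := by
  induction j with
  | zero => rfl
  | succ j ih =>
    simp only [chain, ih fun i h1 h2 => h i h1 (by omega), h (j + 1) (by omega) le_rfl]

lemma dvd_chain_f0Nat (p : ℕ → ℕ) (n j : ℕ) : m ∣ chain m p (f0Nat m n) j := by
  cases j <;> exact dvd_f0Nat _ _

lemma nfNat_zero_ne_succ (hm : 1 < m) (p q : ℕ → ℕ) (l : ℕ) :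
    nfNat m 0 p ≠ nfNat m (l + 1) q := by
  intro h
  obtain ⟨a, ha⟩ := dvd_chain_f0Nat (m := m) q (0 + q 0) l
  obtain ⟨b, hb⟩ := dvd_chain_f0Nat (m := m) q (1 + q 0) l
  have h0 := congrFun h 0
  have h1 := congrFun h 1
  simp only [nfNat, nfTail, ha, hb] at h0 h1
  exact not_dvd_mul_add_one hm a ⟨b, by omega⟩

lemma eventually_chain_pow_add (hm : 1 < m) (p : ℕ → ℕ) (a j : ℕ) :
    ∀ᶠ T in atTop, chain m p (m ^ T + a) j = m ^ T + chain m p a j := by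
  induction j with
  | zero => exact .of_forall fun _ => rfl
  | succ j ih =>
    filter_upwards [ih, (tendsto_pow_atTop_atTop_of_one_lt hm).eventually_gt_atTop
      (chain m p a j + (m ^ (j + 1) * p (j + 1) - 1) + 1)] with T hT hlt
    simp only [chain, hT, add_assoc, f0Nat_pow_add hm hlt]

lemma eventually_nfTail_pow_add (hm : 1 < m) (k : ℕ) (p : ℕ → ℕ) (n : ℕ) :
    ∀ᶠ T in atTop, nfTail m k p (m ^ T + n) = m ^ T + nfTail m k p n := by
  filter_upwards [eventually_chain_pow_add hm p (f0Nat m n) k,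
    (tendsto_pow_atTop_atTop_of_one_lt hm).eventually_gt_atTop (n + 1)] with T hT hlt
  simp only [nfTail, f0Nat_pow_add hm hlt, hT, add_assoc]

/- For large `T`, the input `m ^ T - 1 - p 0` is sent to a constant by `nfNat m (k + 1) p` but to
a value above `m ^ T` by `nfNat m (l + 1) q` as soon as `q 0 > p 0`. -/
lemma le_of_nfNat_eq (hm : 1 < m) {k l : ℕ} {p q : ℕ → ℕ}
    (h : nfNat m (k + 1) p = nfNat m (l + 1) q) : q 0 ≤ p 0 := by
  by_contra! hlt
  obtain ⟨T, hT, hC, hp0⟩ := ((eventually_nfTail_pow_add hm l q (q 0 - p 0 - 1)).and <|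
    ((tendsto_pow_atTop_atTop_of_one_lt hm).eventually_gt_atTop (chain m p 0 k + p (k + 1))).and
    ((tendsto_pow_atTop_atTop_of_one_lt hm).eventually_gt_atTop (p 0))).exists
  have hs := congrFun h (m ^ T - 1 - p 0)
  simp only [nfNat] at hs
  rw [show m ^ T - 1 - p 0 + p 0 = m ^ T - 1 by omega,
    show m ^ T - 1 - p 0 + q 0 = m ^ T + (q 0 - p 0 - 1) by omega, hT] at hs
  have h0 : nfTail m k p (m ^ T - 1) = chain m p 0 k + p (k + 1) := by
    rw [nfTail, f0Nat_pow_sub_one hm]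
  omega

lemma nfTail_eq_of_nfNat_eq (hm : 1 < m) {k l : ℕ} {p q : ℕ → ℕ}
    (h : nfNat m (k + 1) p = nfNat m (l + 1) q) (h0 : p 0 = q 0) :
    nfTail m k p = nfTail m l q := by
  funext n
  obtain ⟨T, hTp, hTq, hT⟩ := ((eventually_nfTail_pow_add hm k p n).and <|
    (eventually_nfTail_pow_add hm l q n).and
    ((tendsto_pow_atTop_atTop_of_one_lt hm).eventually_ge_atTop (p 0))).exists
  have hs := congrFun h (m ^ T + n - p 0)
  simp only [nfNat, ← h0, show m ^ T + n - p 0 + p 0 = m ^ T + n by omega, hTp, hTq] at hs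
  omega

/- On multiples of `m`, `f₀ ∘ f₁^{m^{i+1} c - 1}` acts as `m` times `f₀ ∘ f₁^{m^i c - 1}`
(`f0Nat_mul_add`), and the last exponent splits as `m * (p (k + 1) / m) + p (k + 1) % m`. -/
def reduce (m k : ℕ) (p : ℕ → ℕ) (i : ℕ) : ℕ :=
  if i = k then p (k + 1) / m else if i = 0 then p 1 - 1 else p (i + 1)

lemma f0Nat_mul_add (hm : 1 < m) (y i : ℕ) {c : ℕ} (hc : c ≠ 0) :
    f0Nat m (m * y + (m ^ (i + 1) * c - 1)) = m * f0Nat m (y + (m ^ i * c - 1)) := by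
  have hpos : 0 < m ^ i * c := Nat.mul_pos (pow_pos (by omega) i) (Nat.pos_of_ne_zero hc)
  have hmul : m * (y + m ^ i * c) = m * y + m * (m ^ i * c) := by ring
  have hpow : m ^ (i + 1) * c = m * (m ^ i * c) := by ring
  have := Nat.mul_le_mul_left m hpos
  rw [show m * y + (m ^ (i + 1) * c - 1) = m * (y + m ^ i * c) - 1 by omega,
    f0Nat_mul_sub_one hm (by omega), show y + m ^ i * c - 1 = y + (m ^ i * c - 1) by omega]

lemma chain_mul (hm : 1 < m) {p : ℕ → ℕ} {j : ℕ} (hp : ∀ i, 1 ≤ i → i ≤ j + 1 → 1 ≤ p i)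
    (a : ℕ) :
    chain m p (m * a) (j + 1) = m * chain m (fun i => p (i + 1)) (f0Nat m (a + (p 1 - 1))) j := by
  induction j with
  | zero =>
    simpa [chain] using f0Nat_mul_add hm a 0 (c := p 1) (by have := hp 1 le_rfl le_rfl; omega)
  | succ j ih =>
    rw [chain, ih fun i h1 h2 => hp i h1 (by omega),
      f0Nat_mul_add hm _ _ (c := p (j + 2)) (by have := hp (j + 2) (by omega) le_rfl; omega)]
    rfl

lemma nfTail_mul (hm : 1 < m) {k : ℕ} {p : ℕ → ℕ} (hp : ∀ i, 1 ≤ i → i ≤ k → 1 ≤ p i)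
    (x : ℕ) :
    nfTail m k p (m * x) = m * nfNat m k (reduce m k p) x + p (k + 1) % m := by
  have hdiv := Nat.div_add_mod (p (k + 1)) m
  cases k with
  | zero =>
    simp only [nfTail, nfNat, chain, reduce, if_pos, f0Nat_mul hm]
    rw [mul_add]
    omega
  | succ j =>
    have hchain (a : ℕ) : chain m (fun i => p (i + 1)) a j = chain m (reduce m (j + 1) p) a j :=
      chain_congr (fun i h1 h2 => by rw [reduce, if_neg (by omega), if_neg (by omega)]) a
    have h0 : reduce m (j + 1) p 0 = p 1 - 1 := by rw [reduce, if_neg (by omega), if_pos rfl]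
    simp only [nfTail, nfNat, f0Nat_mul hm, chain_mul hm fun i h1 h2 => hp i h1 h2, hchain, h0]
    simp only [reduce, if_pos, mul_add]
    omega

lemma reduce_pos {k : ℕ} {p : ℕ → ℕ} (hp : ∀ i, 1 ≤ i → i ≤ k → 1 ≤ p i) :
    ∀ i, 1 ≤ i → i ≤ k - 1 → 1 ≤ reduce m k p i := fun i h1 h2 => by
  rw [reduce, if_neg (by omega), if_neg (by omega)]
  exact hp _ (by omega) (by omega)

lemma eq_of_reduce_eq {k : ℕ} {p q : ℕ → ℕ} (hp : ∀ i, 1 ≤ i → i ≤ k → 1 ≤ p i)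
    (hq : ∀ i, 1 ≤ i → i ≤ k → 1 ≤ q i) (hmod : p (k + 1) % m = q (k + 1) % m)
    (h : ∀ i ≤ k, reduce m k p i = reduce m k q i) : ∀ i, 1 ≤ i → i ≤ k + 1 → p i = q i := by
  intro i h1 h2
  rcases h2.lt_or_eq with hi | rfl
  · obtain rfl | h1 := h1.eq_or_lt
    · have := h 0 (by omega)
      simp only [reduce, if_neg (show 0 ≠ k by omega), if_pos] at this
      have := hp 1 le_rfl (by omega)
      have := hq 1 le_rfl (by omega)
      omega
    · simpa [reduce, show i - 1 ≠ k by omega, show i - 1 ≠ 0 by omega,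
        Nat.sub_add_cancel h1.le] using h (i - 1) (by omega)
  · have := h k le_rfl
    simp only [reduce, if_pos] at this
    rw [← Nat.div_add_mod (p (k + 1)) m, ← Nat.div_add_mod (q (k + 1)) m, this, hmod]

lemma eq_and_eq_of_mul_add_eq {a b r s : ℕ} (hr : r < m) (hs : s < m)
    (h : m * a + r = m * b + s) : a = b ∧ r = s := by
  have hrs : r = s := by
    simpa [Nat.mul_add_mod, Nat.mod_eq_of_lt hr, Nat.mod_eq_of_lt hs] using congrArg (· % m) h
  subst hrs
  exact ⟨Nat.eq_of_mul_eq_mul_left (by omega) (Nat.add_right_cancel h), rfl⟩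

theorem eq_of_nfNat_eq (hm : 1 < m) {k l : ℕ} {p q : ℕ → ℕ}
    (hp : ∀ i, 1 ≤ i → i ≤ k - 1 → 1 ≤ p i) (hq : ∀ i, 1 ≤ i → i ≤ l - 1 → 1 ≤ q i)
    (h : nfNat m k p = nfNat m l q) : k = l ∧ ∀ i ≤ k, p i = q i := by
  induction k generalizing l p q with
  | zero =>
    cases l with
    | zero => exact ⟨rfl, fun i hi => by simpa [nfNat, Nat.le_zero.mp hi] using congrFun h 0⟩
    | succ l => exact absurd h (nfNat_zero_ne_succ hm p q l)
  | succ k ih =>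
    cases l with
    | zero => exact absurd h.symm (nfNat_zero_ne_succ hm q p k)
    | succ l =>
      simp only [Nat.add_sub_cancel] at hp hq
      have h0 : p 0 = q 0 := le_antisymm (le_of_nfNat_eq hm h.symm) (le_of_nfNat_eq hm h)
      have htail := nfTail_eq_of_nfNat_eq hm h h0
      have hred : ∀ x, nfNat m k (reduce m k p) x = nfNat m l (reduce m l q) x ∧
          p (k + 1) % m = q (l + 1) % m := fun x =>
        eq_and_eq_of_mul_add_eq (Nat.mod_lt _ (by omega)) (Nat.mod_lt _ (by omega))
          (by rw [← nfTail_mul hm hp x, ← nfTail_mul hm hq x, htail])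
      obtain ⟨rfl, hpq⟩ := ih (reduce_pos hp) (reduce_pos hq) (funext fun x => (hred x).1)
      refine ⟨rfl, fun i hi => ?_⟩
      obtain rfl | hi0 := Nat.eq_zero_or_pos i
      · exact h0
      · exact eq_of_reduce_eq hp hq (hred 0).2 hpq i hi0 hi

end Uniqueness

/-- Two normal-form transformations define the same self-map of `ℕ → Fin m`
if and only if they coincide graphically. -/
theorem normal_form_unique (m : ℕ) (hm : 2 ≤ m) (k l : ℕ) (p q : ℕ → ℕ)
    (hp : ∀ i, 1 ≤ i → i ≤ k - 1 → 1 ≤ p i)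
    (hq : ∀ j, 1 ≤ j → j ≤ l - 1 → 1 ≤ q j)
    (h : nf m k p = nf m l q) :
    k = l ∧ ∀ i ≤ k, p i = q i := by
  have : NeZero m := ⟨by omega⟩
  refine eq_of_nfNat_eq hm hp hq (funext fun n => digitWord_injective hm ?_)
  rw [← nf_digitWord hm, ← nf_digitWord hm, h]
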